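/- arXiv:1808.06035 — 3 statements merged into one kernel-verified Lean document; each statement's English description precedes it below -/
import Mathlib

section
/- Assume b ≠ 0. Suppose a tuple (g₁, g₂, h₁, h₂, k₁, k₂) of polynomials in ℂ[λ,∂] satisfies the system S(a,b,c) and moreover g₂(λ,∂) = ∂ + (a−1)λ + b + c and h₂(λ,∂) = ∂ + λ + c. Then g₁ = h₁ = k₁ = k₂ = 0. -/
open MvPolynomial

noncomputable section

/-- Polynomials in `ℂ[λ, ∂]`: variable `0` is `λ`, variable `1` is `∂`. -/
abbrev P2 : Type := MvPolynomial (Fin 2) ℂ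

/-- Polynomials in `ℂ[λ, μ, ∂]`: variable `0` is `λ`, variable `1` is `μ`, variable `2` is `∂`. -/
abbrev P3 : Type := MvPolynomial (Fin 3) ℂ

/-- Substitution: `sb p u v` is `p(u, v)`, the image of `p` under `λ ↦ u`, `∂ ↦ v`. -/
def sb {n : ℕ} (p : P2) (u v : MvPolynomial (Fin n) ℂ) : MvPolynomial (Fin n) ℂ :=
  aeval ![u, v] p

/-- `λ` in `ℂ[λ,μ,∂]`. -/
def lm : P3 := X 0
/-- `μ` in `ℂ[λ,μ,∂]`. -/
def mu : P3 := X 1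
/-- `∂` in `ℂ[λ,μ,∂]`. -/
def pa : P3 := X 2
/-- `λ` in `ℂ[λ,∂]`. -/
def lm' : P2 := X 0
/-- `∂` in `ℂ[λ,∂]`. -/
def pa' : P2 := X 1

/-- The system `S(a,b,c)` of equations (E1)-(E14). -/
def SatS (a b c : ℂ) (g1 g2 h1 h2 k1 k2 : P2) : Prop :=
  -- (E1)
  ((C (a - 1) * lm - mu + C b) * sb h1 (lm + mu) pa =
      sb h1 mu (lm + pa) * (pa + lm + C c) + sb h2 mu (lm + pa) * sb g1 lm pa
        - (pa + mu + lm + C c) * sb h1 mu pa) ∧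
  -- (E2)
  ((C (a - 1) * lm - mu + C b) * sb h2 (lm + mu) pa =
      sb h2 mu (lm + pa) * sb g2 lm pa - (pa + mu + lm + C c) * sb h2 mu pa) ∧
  -- (E3)
  ((lm - mu) * sb g1 (lm + mu) pa =
      sb g1 mu (lm + pa) * (pa + lm + C c) + sb g2 mu (lm + pa) * sb g1 lm pa
        - sb g1 lm (mu + pa) * (pa + mu + C c) - sb g2 lm (mu + pa) * sb g1 mu pa) ∧
  -- (E4)
  ((lm - mu) * sb g2 (lm + mu) pa =
      sb g2 mu (lm + pa) * sb g2 lm pa - sb g2 lm (mu + pa) * sb g2 mu pa) ∧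
  -- (E5)
  ((C (a - 1) * lm - mu + C b) * sb k1 (lm + mu) pa =
      sb k1 mu (lm + pa) * (pa + lm + C c) + sb k2 mu (lm + pa) * sb g1 lm pa
        - sb g1 lm (mu + pa) * sb h1 mu pa - sb g2 lm (mu + pa) * sb k1 mu pa) ∧
  -- (E6)
  ((C (a - 1) * lm - mu + C b) * sb k2 (lm + mu) pa =
      sb k2 mu (lm + pa) * sb g2 lm pa - sb g1 lm (mu + pa) * sb h2 mu pa
        - sb g2 lm (mu + pa) * sb k2 mu pa) ∧
  -- (E7)
  (sb h1 mu (lm + pa) * sb h1 lm pa + sb h2 mu (lm + pa) * sb k1 lm pa =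
      sb h1 lm (mu + pa) * sb h1 mu pa + sb h2 lm (mu + pa) * sb k1 mu pa) ∧
  -- (E8)
  (sb h1 mu (lm + pa) * sb h2 lm pa + sb h2 mu (lm + pa) * sb k2 lm pa =
      sb h1 lm (mu + pa) * sb h2 mu pa + sb h2 lm (mu + pa) * sb k2 mu pa) ∧
  -- (E9)
  (sb k1 mu (lm + pa) * sb h1 lm pa + sb k2 mu (lm + pa) * sb k1 lm pa =
      sb k1 lm (mu + pa) * sb h1 mu pa + sb k2 lm (mu + pa) * sb k1 mu pa) ∧
  -- (E10)
  (sb k1 mu (lm + pa) * sb h2 lm pa + sb k2 mu (lm + pa) * sb k2 lm pa =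
      sb k1 lm (mu + pa) * sb h2 mu pa + sb k2 lm (mu + pa) * sb k2 mu pa) ∧
  -- (E11)
  (g1 = sb h1 (-lm' - pa') pa') ∧
  -- (E12)
  (g2 - sb h2 (-lm' - pa') pa' = pa' + C a * lm' + C b) ∧
  -- (E13)
  (k1 = sb k1 (-lm' - pa') pa') ∧
  -- (E14)
  (k2 = sb k2 (-lm' - pa') pa')

/-!
Specialising `λ = 0` in (E1), (E5), (E6) makes them linear in the unknowns: with
`φ(∂) = g₁(0, ∂)` they read `b h₁ = (λ + ∂ + c) φ(∂)`, `b k₂ = -(λ + ∂ + c) φ(λ + ∂)` and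
`2b k₁ = k₂ φ(∂) - φ(λ + ∂) h₁`. The symmetry (E14) of `k₂` under `λ ↦ -λ - ∂` turns the second
into `(λ + ∂ + c) φ(λ + ∂) = (c - λ) φ(-λ)`, and at `λ = c` this gives `(∂ + c) φ(∂) = 0`,
so `φ = 0`. Then `h₁ = 0`, `g₁ = 0` by (E11), `k₂ = 0` and `k₁ = 0`, all because `b ≠ 0`.
-/

section Substitution

variable {n : ℕ}

@[simp] lemma sb_zero (u v : MvPolynomial (Fin n) ℂ) : sb 0 u v = 0 := map_zero _

@[simp] lemma sb_C (x : ℂ) (u v : MvPolynomial (Fin n) ℂ) : sb (C x) u v = C x := aeval_C _ _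

@[simp] lemma sb_add (p q : P2) (u v : MvPolynomial (Fin n) ℂ) :
    sb (p + q) u v = sb p u v + sb q u v := map_add _ _ _

@[simp] lemma sb_sub (p q : P2) (u v : MvPolynomial (Fin n) ℂ) :
    sb (p - q) u v = sb p u v - sb q u v := map_sub _ _ _

@[simp] lemma sb_neg (p : P2) (u v : MvPolynomial (Fin n) ℂ) : sb (-p) u v = -sb p u v :=
  map_neg _ _

@[simp] lemma sb_mul (p q : P2) (u v : MvPolynomial (Fin n) ℂ) :
    sb (p * q) u v = sb p u v * sb q u v := map_mul _ _ _

@[simp] lemma sb_lm' (u v : MvPolynomial (Fin n) ℂ) : sb lm' u v = u := aeval_X _ _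

@[simp] lemma sb_pa' (u v : MvPolynomial (Fin n) ℂ) : sb pa' u v = v := aeval_X _ _

lemma AlgHom.map_sb {m : ℕ} (f : MvPolynomial (Fin n) ℂ →ₐ[ℂ] MvPolynomial (Fin m) ℂ)
    (p : P2) (u v : MvPolynomial (Fin n) ℂ) : f (sb p u v) = sb p (f u) (f v) := by
  have : f.comp (aeval ![u, v]) = aeval ![f u, f v] := by
    ext i
    fin_cases i <;> simp
  exact DFunLike.congr_fun this p

@[simp] lemma sb_sb (p u v : P2) (u' v' : MvPolynomial (Fin n) ℂ) :
    sb (sb p u v) u' v' = sb p (sb u u' v') (sb v u' v') :=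
  (aeval ![u', v']).map_sb p u v

@[simp] lemma sb_lm'_pa' (p : P2) : sb p lm' pa' = p := by
  have : ![lm', pa'] = X := by
    funext i
    fin_cases i <;> rfl
  simp [sb, this]

end Substitution

def setLmZero : P3 →ₐ[ℂ] P2 := aeval ![0, lm', pa']

@[simp] lemma setLmZero_C (x : ℂ) : setLmZero (C x) = C x := aeval_C _ _

@[simp] lemma setLmZero_lm : setLmZero lm = 0 := aeval_X _ _

@[simp] lemma setLmZero_mu : setLmZero mu = lm' := aeval_X _ _

@[simp] lemma setLmZero_pa : setLmZero pa = pa' := aeval_X _ _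

lemma MvPolynomial.eq_zero_of_C_mul_eq_zero {σ K : Type*} [Field K] {b : K} (hb : b ≠ 0)
    {p : MvPolynomial σ K} (h : C b * p = 0) : p = 0 :=
  (smul_eq_zero.mp (C_mul'.symm.trans h)).resolve_left hb

lemma MvPolynomial.X_add_C_ne_zero {σ R : Type*} [CommRing R] [Nontrivial R] (i : σ) (c : R) :
    X i + C c ≠ 0 := fun h => by
  simpa using congrArg (eval fun _ => 1 - c) h

lemma sb_zero_pa'_eq_zero_of_reflect {p : P2} {c : ℂ}
    (h : (lm' + pa' + C c) * sb p 0 (lm' + pa') = (C c - lm') * sb p 0 (-lm')) :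
    sb p 0 pa' = 0 := by
  have h' := congrArg (sb · (C c) (pa' - C c)) h
  simp only [sb_mul, sb_add, sb_sub, sb_neg, sb_sb, sb_lm', sb_pa', sb_C, sb_zero, sub_self,
    zero_mul] at h'
  rw [show C c + (pa' - C c) + C c = pa' + C c by ring, add_sub_cancel] at h'
  exact (mul_eq_zero.mp h').resolve_left (X_add_C_ne_zero 1 c)

namespace SatS

variable {a b c : ℂ} {g1 g2 h1 h2 k1 k2 : P2}

lemma C_mul_h1 (hS : SatS a b c g1 g2 h1 h2 k1 k2) (hh2 : h2 = pa' + lm' + C c) :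
    C b * h1 = (pa' + lm' + C c) * sb g1 0 pa' := by
  have e1 := congrArg setLmZero hS.1
  simp only [map_mul, map_add, map_sub, AlgHom.map_sb, setLmZero_C, setLmZero_lm, setLmZero_mu,
    setLmZero_pa, mul_zero, zero_add, add_zero, sb_lm'_pa', hh2, sb_add, sb_lm', sb_pa', sb_C] at e1
  linear_combination e1

lemma C_mul_k2 (hS : SatS a b c g1 g2 h1 h2 k1 k2)
    (hg2 : g2 = pa' + C (a - 1) * lm' + C (b + c)) (hh2 : h2 = pa' + lm' + C c) :
    C b * k2 = -((lm' + pa' + C c) * sb g1 0 (lm' + pa')) := by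
  obtain ⟨-, -, -, -, -, e6, -⟩ := hS
  have e6 := congrArg setLmZero e6
  simp only [map_mul, map_add, map_sub, AlgHom.map_sb, setLmZero_C, setLmZero_lm, setLmZero_mu,
    setLmZero_pa, mul_zero, zero_add, add_zero, sb_lm'_pa', hg2, hh2, sb_add, sb_mul, sb_lm',
    sb_pa', sb_C] at e6
  linear_combination e6

lemma two_mul_C_mul_k1 (hS : SatS a b c g1 g2 h1 h2 k1 k2)
    (hg2 : g2 = pa' + C (a - 1) * lm' + C (b + c)) :
    2 * C b * k1 = k2 * sb g1 0 pa' - sb g1 0 (lm' + pa') * h1 := by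
  obtain ⟨-, -, -, -, e5, -⟩ := hS
  have e5 := congrArg setLmZero e5
  simp only [map_mul, map_add, map_sub, AlgHom.map_sb, setLmZero_C, setLmZero_lm, setLmZero_mu,
    setLmZero_pa, mul_zero, zero_add, add_zero, sb_lm'_pa', hg2, sb_add, sb_mul, sb_lm',
    sb_pa', sb_C] at e5
  linear_combination e5

lemma sb_g1_zero_pa'_eq_zero (hS : SatS a b c g1 g2 h1 h2 k1 k2)
    (hg2 : g2 = pa' + C (a - 1) * lm' + C (b + c)) (hh2 : h2 = pa' + lm' + C c) :
    sb g1 0 pa' = 0 := by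
  have hk2 := hS.C_mul_k2 hg2 hh2
  have hk2' := congrArg (sb · (-lm' - pa') pa') hk2
  obtain ⟨-, -, -, -, -, -, -, -, -, -, -, -, -, e14⟩ := hS
  simp only [sb_mul, sb_neg, sb_add, sb_C, sb_sb, sb_lm', sb_pa', sb_zero, ← e14,
    show -lm' - pa' + pa' = -lm' by ring] at hk2'
  exact sb_zero_pa'_eq_zero_of_reflect (by linear_combination hk2 - hk2')

end SatS

/-- Lemma 3.5: in Case (C) with `b ≠ 0`, i.e. when
`g₂ = ∂ + (a−1)λ + b + c` and `h₂ = ∂ + λ + c`, we get `g₁ = h₁ = k₁ = k₂ = 0`. -/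
theorem stmt6 (a b c : ℂ) (hb : b ≠ 0) (g1 g2 h1 h2 k1 k2 : P2)
    (hS : SatS a b c g1 g2 h1 h2 k1 k2)
    (hg2 : g2 = pa' + C (a - 1) * lm' + C (b + c)) (hh2 : h2 = pa' + lm' + C c) :
    g1 = 0 ∧ h1 = 0 ∧ k1 = 0 ∧ k2 = 0 := by
  have hφ := hS.sb_g1_zero_pa'_eq_zero hg2 hh2
  have hh1 : h1 = 0 := eq_zero_of_C_mul_eq_zero hb <| by rw [hS.C_mul_h1 hh2, hφ, mul_zero]
  have hg1 : g1 = 0 := by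
    obtain ⟨-, -, -, -, -, -, -, -, -, -, e11, -⟩ := hS
    rw [e11, hh1, sb_zero]
  have hk2 : k2 = 0 := eq_zero_of_C_mul_eq_zero hb <| by
    rw [hS.C_mul_k2 hg2 hh2, hg1, sb_zero, mul_zero, neg_zero]
  have hk1 : k1 = 0 := eq_zero_of_C_mul_eq_zero (mul_ne_zero two_ne_zero hb) <| by
    rw [C_mul, map_ofNat C 2, hS.two_mul_C_mul_k1 hg2, hg1, hh1]; simp
  exact ⟨hg1, hh1, hk1, hk2⟩

end
end

section
/- Let a, b ∈ ℂ and c ∈ ℂ with c ≠ 0. The ℂ-bilinear product ∘ on A defined on basis elements by L_m∘L_n = cL_{m+n+1} − (n+1)L_{m+n}, L_m∘W_n = ((a−1)(m+1)−(n+1))W_{m+n} + (b+c)W_{m+n+1}, W_m∘L_n = cW_{m+n+1} and W_m∘W_n = 0 is left-symmetric, and it is a compatible left-symmetric algebraic structure on the Lie algebra Coeff(W(a,b)). -/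
noncomputable section

/-- `A` is the free `ℂ`-vector space with basis `{L m : m ∈ ℤ} ∪ {W m : m ∈ ℤ}`. -/
abbrev A : Type := (ℤ ⊕ ℤ) →₀ ℂ

/-- The basis vector `L m`. -/
def L (m : ℤ) : A := Finsupp.single (Sum.inl m) 1

/-- The basis vector `W m`. -/
def W (m : ℤ) : A := Finsupp.single (Sum.inr m) 1

/-! Both identities compare multilinear maps in the arguments `x, y, z`: the associator against its
swap in the first two arguments, and `M - M.flip` against `B`. Multilinear maps agreeing on a basis
are equal, so it suffices to check the identities on the basis vectors `L m`, `W m`, where they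
reduce to finitely many polynomial identities in `a, b, c, m, n, k`. -/

namespace LinearMap

variable {R ι M : Type*} [CommRing R] [AddCommGroup M] [Module R M]

/-- The associator `(x ∘ y) ∘ z - x ∘ (y ∘ z)` of `x ∘ y := μ x y`, as a trilinear map. -/
def associator (μ : M →ₗ[R] M →ₗ[R] M) : M →ₗ[R] M →ₗ[R] M →ₗ[R] M :=
  μ.compr₂ μ - (llcomp R M M M ∘ₗ μ).compl₂ μ

@[simp]
theorem associator_apply (μ : M →ₗ[R] M →ₗ[R] M) (x y z : M) :
    associator μ x y z = μ (μ x y) z - μ x (μ y z) :=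
  rfl

theorem ext_basis₃ {N : Type*} [AddCommGroup N] [Module R N] (b : Module.Basis ι R M)
    {f g : M →ₗ[R] M →ₗ[R] M →ₗ[R] N}
    (h : ∀ i j k, f (b i) (b j) (b k) = g (b i) (b j) (b k)) : f = g :=
  ext_basis b b fun i j => b.ext fun k => h i j k

theorem associator_swap_of_basis (b : Module.Basis ι R M) (μ : M →ₗ[R] M →ₗ[R] M)
    (h : ∀ i j k, associator μ (b i) (b j) (b k) = associator μ (b j) (b i) (b k))
    (x y z : M) : associator μ x y z = associator μ y x z := by
  have : associator μ = (associator μ).flip := ext_basis₃ b h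
  exact congr($this x y z)

theorem sub_flip_eq_of_basis (b : Module.Basis ι R M) (μ β : M →ₗ[R] M →ₗ[R] M)
    (h : ∀ i j, μ (b i) (b j) - μ (b j) (b i) = β (b i) (b j)) (x y : M) :
    μ x y - μ y x = β x y := by
  have : μ - μ.flip = β := ext_basis b b h
  exact congr($this x y)

end LinearMap

theorem basisSingleOne_eq_sum_elim_L_W (i : ℤ ⊕ ℤ) :
    Finsupp.basisSingleOne i = Sum.elim L W i := by
  cases i <;> rfl

section Product

variable (a b c : ℂ) (M : A →ₗ[ℂ] A →ₗ[ℂ] A)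
    (hLL : ∀ m n : ℤ, M (L m) (L n) = c • L (m + n + 1) - ((n : ℂ) + 1) • L (m + n))
    (hLW : ∀ m n : ℤ, M (L m) (W n) =
      ((a - 1) * ((m : ℂ) + 1) - ((n : ℂ) + 1)) • W (m + n) + (b + c) • W (m + n + 1))
    (hWL : ∀ m n : ℤ, M (W m) (L n) = c • W (m + n + 1))
    (hWW : ∀ m n : ℤ, M (W m) (W n) = 0)
include hLL hLW hWL hWW

theorem associator_swap_basis (u v w : ℤ ⊕ ℤ) :
    M.associator (Sum.elim L W u) (Sum.elim L W v) (Sum.elim L W w) =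
      M.associator (Sum.elim L W v) (Sum.elim L W u) (Sum.elim L W w) := by
  -- `ring_nf` normalizes the indices, so that e.g. `W (m + n + 1)` and `W (n + m + 1)` become
  -- the same atom for `module`.
  rcases u with m | m <;> rcases v with n | n <;> rcases w with k | k <;>
    simp only [Sum.elim_inl, Sum.elim_inr, LinearMap.associator_apply, hLL, hLW, hWL, hWW,
      map_sub, map_add, map_smul, map_zero, LinearMap.sub_apply, LinearMap.add_apply,
      LinearMap.smul_apply, LinearMap.zero_apply] <;>
    (try ring_nf) <;> module

variable (B : A →ₗ[ℂ] A →ₗ[ℂ] A)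
    (hBLL : ∀ m n : ℤ, B (L m) (L n) = ((m : ℂ) - (n : ℂ)) • L (m + n))
    (hBLW : ∀ m n : ℤ, B (L m) (W n) =
      (((m : ℂ) + 1) * (a - 1) - ((n : ℂ) + 1)) • W (m + n) + b • W (m + n + 1))
    (hBWL : ∀ m n : ℤ, B (W n) (L m) = -B (L m) (W n))
    (hBWW : ∀ m n : ℤ, B (W m) (W n) = 0)
include hBLL hBLW hBWL hBWW

theorem sub_swap_basis (u v : ℤ ⊕ ℤ) :
    M (Sum.elim L W u) (Sum.elim L W v) - M (Sum.elim L W v) (Sum.elim L W u) =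
      B (Sum.elim L W u) (Sum.elim L W v) := by
  rcases u with m | m <;> rcases v with n | n <;>
    simp only [Sum.elim_inl, Sum.elim_inr, hLL, hLW, hWL, hWW, hBLL, hBLW, hBWL, hBWW,
      sub_self] <;>
    ring_nf <;> module

end Product

theorem stmt13_general (a b c : ℂ)
    -- `M` is the ℂ-bilinear product `∘` given on basis elements by:
    (M : A →ₗ[ℂ] A →ₗ[ℂ] A)
    (hLL : ∀ m n : ℤ, M (L m) (L n) = c • L (m + n + 1) - ((n : ℂ) + 1) • L (m + n))
    (hLW : ∀ m n : ℤ, M (L m) (W n) =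
      ((a - 1) * ((m : ℂ) + 1) - ((n : ℂ) + 1)) • W (m + n) + (b + c) • W (m + n + 1))
    (hWL : ∀ m n : ℤ, M (W m) (L n) = c • W (m + n + 1))
    (hWW : ∀ m n : ℤ, M (W m) (W n) = 0)
    -- `B` is the ℂ-bilinear Lie bracket of Coeff(W(a,b)) on basis elements:
    (B : A →ₗ[ℂ] A →ₗ[ℂ] A)
    (hBLL : ∀ m n : ℤ, B (L m) (L n) = ((m : ℂ) - (n : ℂ)) • L (m + n))
    (hBLW : ∀ m n : ℤ, B (L m) (W n) =
      (((m : ℂ) + 1) * (a - 1) - ((n : ℂ) + 1)) • W (m + n)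
        + b • W (m + n + 1))
    (hBWL : ∀ m n : ℤ, B (W n) (L m) = -B (L m) (W n))
    (hBWW : ∀ m n : ℤ, B (W m) (W n) = 0) :
    -- `∘ = M` is left-symmetric:
    ((∀ x y z : A, M (M x y) z - M x (M y z) = M (M y x) z - M y (M x z)) ∧
    -- and compatible with the Lie bracket:
    (∀ x y : A, M x y - M y x = B x y)) := by
  simp only [← LinearMap.associator_apply]
  refine ⟨LinearMap.associator_swap_of_basis Finsupp.basisSingleOne M ?_,
    LinearMap.sub_flip_eq_of_basis Finsupp.basisSingleOne M B ?_⟩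
  · simpa only [basisSingleOne_eq_sum_elim_L_W] using
      associator_swap_basis a b c M hLL hLW hWL hWW
  · simpa only [basisSingleOne_eq_sum_elim_L_W] using
      sub_swap_basis a b c M hLL hLW hWL hWW B hBLL hBLW hBWL hBWW

/-- Corollary 3.8 (2), with `c ≠ 0`. -/
theorem stmt13 (a b c : ℂ) (hc : c ≠ 0)
    -- `M` is the ℂ-bilinear product `∘` given on basis elements by:
    (M : A →ₗ[ℂ] A →ₗ[ℂ] A)
    (hLL : ∀ m n : ℤ, M (L m) (L n) = c • L (m + n + 1) - ((n : ℂ) + 1) • L (m + n))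
    (hLW : ∀ m n : ℤ, M (L m) (W n) =
      ((a - 1) * ((m : ℂ) + 1) - ((n : ℂ) + 1)) • W (m + n) + (b + c) • W (m + n + 1))
    (hWL : ∀ m n : ℤ, M (W m) (L n) = c • W (m + n + 1))
    (hWW : ∀ m n : ℤ, M (W m) (W n) = 0)
    -- `B` is the ℂ-bilinear Lie bracket of Coeff(W(a,b)) on basis elements:
    (B : A →ₗ[ℂ] A →ₗ[ℂ] A)
    (hBLL : ∀ m n : ℤ, B (L m) (L n) = ((m : ℂ) - (n : ℂ)) • L (m + n))
    (hBLW : ∀ m n : ℤ, B (L m) (W n) =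
      (((m : ℂ) + 1) * (a - 1) - ((n : ℂ) + 1)) • W (m + n)
        + b • W (m + n + 1))
    (hBWL : ∀ m n : ℤ, B (W n) (L m) = -B (L m) (W n))
    (hBWW : ∀ m n : ℤ, B (W m) (W n) = 0) :
    -- `∘ = M` is left-symmetric:
    ((∀ x y z : A, M (M x y) z - M x (M y z) = M (M y x) z - M y (M x z)) ∧
    -- and compatible with the Lie bracket:
    (∀ x y : A, M x y - M y x = B x y)) :=
  stmt13_general a b c M hLL hLW hWL hWW B hBLL hBLW hBWL hBWW
end
end

section
/- Let c ∈ ℂ, let k₂ ∈ ℂ with k₂ ≠ 0, and set a = 1, b = 0. The ℂ-bilinear product ∘ on A defined on basis elements by L_m∘L_n = cL_{m+n+1} − (n+1)L_{m+n}, L_m∘W_n = −(m+n+2)W_{m+n} + cW_{m+n+1}, W_m∘L_n = −(n+1)W_{m+n} + cW_{m+n+1} and W_m∘W_n = k₂W_{m+n+1} is left-symmetric, and it is a compatible left-symmetric algebraic structure on the Lie algebra Coeff(W(1,0)). -/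
noncomputable section

/-! Left symmetry and compatibility are identities between multilinear maps, so they only need
to be checked on triples (pairs) of basis vectors `L m`, `W n`; there they reduce to finitely many
identities among the structure constants, polynomial in `m`, `n`, `k`, `c` and `k₂`. -/

section BilinearProduct

variable {ι R V : Type*} [CommRing R] [AddCommGroup V] [Module R V]

def bilinAssociator (M : V →ₗ[R] V →ₗ[R] V) : V →ₗ[R] V →ₗ[R] V →ₗ[R] V :=
  (LinearMap.llcomp R V V (V →ₗ[R] V) M).comp M -
    (LinearMap.lcomp R (V →ₗ[R] V) M).comp ((LinearMap.llcomp R V V V).comp M)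

theorem bilinAssociator_apply (M : V →ₗ[R] V →ₗ[R] V) (x y z : V) :
    bilinAssociator M x y z = M (M x y) z - M x (M y z) :=
  rfl

variable (b : Module.Basis ι R V)

theorem leftSymmetric_of_basis (M : V →ₗ[R] V →ₗ[R] V)
    (h : ∀ i j k, M (M (b i) (b j)) (b k) - M (b i) (M (b j) (b k)) =
      M (M (b j) (b i)) (b k) - M (b j) (M (b i) (b k))) (x y z : V) :
    M (M x y) z - M x (M y z) = M (M y x) z - M y (M x z) := by
  have hsymm : bilinAssociator M = (bilinAssociator M).flip :=
    LinearMap.ext_basis b b fun i j => b.ext fun k => by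
      simpa only [LinearMap.flip_apply, bilinAssociator_apply] using h i j k
  simpa only [LinearMap.flip_apply, bilinAssociator_apply] using
    LinearMap.congr_fun (LinearMap.congr_fun₂ hsymm x y) z

theorem sub_flip_eq_of_basis (M B : V →ₗ[R] V →ₗ[R] V)
    (h : ∀ i j, M (b i) (b j) - M (b j) (b i) = B (b i) (b j)) (x y : V) :
    M x y - M y x = B x y := by
  have hcomm : M - M.flip = B := LinearMap.ext_basis b b h
  simpa only [LinearMap.sub_apply, LinearMap.flip_apply] using LinearMap.congr_fun₂ hcomm x y

end BilinearProduct

theorem basisSingleOne_inl (m : ℤ) :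
    (Finsupp.basisSingleOne : Module.Basis (ℤ ⊕ ℤ) ℂ A) (.inl m) = L m :=
  rfl

theorem basisSingleOne_inr (m : ℤ) :
    (Finsupp.basisSingleOne : Module.Basis (ℤ ⊕ ℤ) ℂ A) (.inr m) = W m :=
  rfl

theorem stmt19_general (c k₂ : ℂ)
    -- `M` is the ℂ-bilinear product `∘` given on basis elements by:
    (M : A →ₗ[ℂ] A →ₗ[ℂ] A)
    (hLL : ∀ m n : ℤ, M (L m) (L n) = c • L (m + n + 1) - ((n : ℂ) + 1) • L (m + n))
    (hLW : ∀ m n : ℤ, M (L m) (W n) =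
      -((m : ℂ) + (n : ℂ) + 2) • W (m + n) + c • W (m + n + 1))
    (hWL : ∀ m n : ℤ, M (W m) (L n) = -((n : ℂ) + 1) • W (m + n) + c • W (m + n + 1))
    (hWW : ∀ m n : ℤ, M (W m) (W n) = k₂ • W (m + n + 1))
    -- `B` is the ℂ-bilinear Lie bracket of Coeff(W(a,b)) on basis elements:
    (B : A →ₗ[ℂ] A →ₗ[ℂ] A)
    (hBLL : ∀ m n : ℤ, B (L m) (L n) = ((m : ℂ) - (n : ℂ)) • L (m + n))
    (hBLW : ∀ m n : ℤ, B (L m) (W n) =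
      (((m : ℂ) + 1) * ((1 : ℂ) - 1) - ((n : ℂ) + 1)) • W (m + n)
        + (0 : ℂ) • W (m + n + 1))
    (hBWL : ∀ m n : ℤ, B (W n) (L m) = -B (L m) (W n))
    (hBWW : ∀ m n : ℤ, B (W m) (W n) = 0) :
    -- `∘ = M` is left-symmetric:
    ((∀ x y z : A, M (M x y) z - M x (M y z) = M (M y x) z - M y (M x z)) ∧
    -- and compatible with the Lie bracket:
    (∀ x y : A, M x y - M y x = B x y)) := by
  refine ⟨leftSymmetric_of_basis Finsupp.basisSingleOne M ?_,
    sub_flip_eq_of_basis Finsupp.basisSingleOne M B ?_⟩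
  · rintro (m | m) (n | n) (k | k) <;>
      simp only [basisSingleOne_inl, basisSingleOne_inr, hLL, hLW, hWL, hWW, map_sub, map_add,
        map_smul, LinearMap.sub_apply, LinearMap.add_apply, LinearMap.smul_apply] <;>
      ring_nf <;> module
  · rintro (m | m) (n | n) <;>
      simp only [basisSingleOne_inl, basisSingleOne_inr, hLL, hLW, hWL, hWW, hBLL, hBLW, hBWL,
        hBWW] <;>
      ring_nf <;> module

/-- Corollary 3.8 (11), on Coeff(W(1,0)), with `k₂ ≠ 0`. -/
theorem stmt19 (c k₂ : ℂ) (hk : k₂ ≠ 0)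
    -- `M` is the ℂ-bilinear product `∘` given on basis elements by:
    (M : A →ₗ[ℂ] A →ₗ[ℂ] A)
    (hLL : ∀ m n : ℤ, M (L m) (L n) = c • L (m + n + 1) - ((n : ℂ) + 1) • L (m + n))
    (hLW : ∀ m n : ℤ, M (L m) (W n) =
      -((m : ℂ) + (n : ℂ) + 2) • W (m + n) + c • W (m + n + 1))
    (hWL : ∀ m n : ℤ, M (W m) (L n) = -((n : ℂ) + 1) • W (m + n) + c • W (m + n + 1))
    (hWW : ∀ m n : ℤ, M (W m) (W n) = k₂ • W (m + n + 1))
    -- `B` is the ℂ-bilinear Lie bracket of Coeff(W(a,b)) on basis elements: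
    (B : A →ₗ[ℂ] A →ₗ[ℂ] A)
    (hBLL : ∀ m n : ℤ, B (L m) (L n) = ((m : ℂ) - (n : ℂ)) • L (m + n))
    (hBLW : ∀ m n : ℤ, B (L m) (W n) =
      (((m : ℂ) + 1) * ((1 : ℂ) - 1) - ((n : ℂ) + 1)) • W (m + n)
        + (0 : ℂ) • W (m + n + 1))
    (hBWL : ∀ m n : ℤ, B (W n) (L m) = -B (L m) (W n))
    (hBWW : ∀ m n : ℤ, B (W m) (W n) = 0) :
    -- `∘ = M` is left-symmetric:
    ((∀ x y z : A, M (M x y) z - M x (M y z) = M (M y x) z - M y (M x z)) ∧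
    -- and compatible with the Lie bracket:
    (∀ x y : A, M x y - M y x = B x y)) :=
  stmt19_general c k₂ M hLL hLW hWL hWW B hBLL hBLW hBWL hBWW
end
end
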